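/- arXiv:1403.4691 — 3 statements merged into one kernel-verified Lean document; each statement's English description precedes it below -/
import Mathlib

section
/- Let V : [0,∞) → ℝ be a function that is continuous and piecewise differentiable, and suppose on [0,T] its derivative satisfies V'(t) ≤ D·V(t) on a set of total measure μ and V'(t) ≤ −C·V(t) on the complementary set, where C, D > 0 and V ≥ 0. Then V(T) ≤ exp(Dμ − C(T−μ)) V(0). -/
/-!
By outer regularity the mismatch set `S` may be replaced by an open set `U ⊇ S` of measure at
most `μ + ε`. With `m t` the measure of `U ∩ (-∞, t)`, the function
`t ↦ V t * exp (C t - (C + D) m t)` is nonincreasing on `[0, T]`: on the open set `U` the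
function `m` has slope `1` and the exponent slope `-D`, which `V' ≤ D V` compensates; off `U`
the exponent grows at most like `C t` since `m` is monotone, which `V' ≤ -C V` compensates.
As the function is continuous with nonpositive right Dini derivative off a finite set, this gives
`V T ≤ exp ((C + D) (μ + ε) - C T) * V 0`; let `ε → 0`.
-/

open MeasureTheory Set Filter Topology

noncomputable def occupationTime (U : Set ℝ) (t : ℝ) : ℝ :=
  volume.real (U ∩ Iio t)

section OccupationTime

variable {U : Set ℝ} {x z : ℝ}

theorem occupationTime_sub (hU : volume U ≠ ⊤) (hxz : x ≤ z) :
    occupationTime U z - occupationTime U x = volume.real (U ∩ Ico x z) := by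
  have hfin : volume (U ∩ Iio z) ≠ ⊤ := measure_ne_top_of_subset inter_subset_left hU
  have hbelow : U ∩ Iio z ∩ Iio x = U ∩ Iio x := by
    ext t
    simp only [mem_inter_iff, mem_Iio]
    constructor
    · exact fun h => ⟨h.1.1, h.2⟩
    · exact fun h => ⟨⟨h.1, h.2.trans_le hxz⟩, h.2⟩
  have habove : (U ∩ Iio z) \ Iio x = U ∩ Ico x z := by
    ext t
    simp only [Set.mem_sdiff, mem_inter_iff, mem_Iio, mem_Ico, not_lt]
    tauto
  rw [occupationTime, occupationTime, ← measureReal_inter_add_sdiff measurableSet_Iio hfin,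
    hbelow, habove, add_sub_cancel_left]

theorem occupationTime_sub_le (hU : volume U ≠ ⊤) (hxz : x ≤ z) :
    occupationTime U z - occupationTime U x ≤ z - x := by
  rw [occupationTime_sub hU hxz, ← Real.volume_real_Ico_of_le hxz]
  exact measureReal_mono inter_subset_right measure_Ico_lt_top.ne

theorem occupationTime_sub_of_Ico_subset (hU : volume U ≠ ⊤) (hxz : x ≤ z) (hIco : Ico x z ⊆ U) :
    occupationTime U z - occupationTime U x = z - x := by
  rw [occupationTime_sub hU hxz, inter_eq_right.2 hIco, Real.volume_real_Ico_of_le hxz]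

theorem monotone_occupationTime (hU : volume U ≠ ⊤) : Monotone (occupationTime U) :=
  fun _ _ hxz => sub_nonneg.1 ((occupationTime_sub hU hxz).symm ▸ measureReal_nonneg)

theorem lipschitzWith_occupationTime (hU : volume U ≠ ⊤) :
    LipschitzWith 1 (occupationTime U) := by
  refine LipschitzWith.of_dist_le_mul fun z x => ?_
  rw [NNReal.coe_one, one_mul, Real.dist_eq, Real.dist_eq]
  wlog hxz : x ≤ z generalizing x z
  · rw [abs_sub_comm, abs_sub_comm z]
    exact this x z (le_of_not_ge hxz)
  rw [abs_of_nonneg (sub_nonneg.2 (monotone_occupationTime hU hxz)),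
    abs_of_nonneg (sub_nonneg.2 hxz)]
  exact occupationTime_sub_le hU hxz

end OccupationTime

theorem le_of_frequently_slope_right_lt {ψ : ℝ → ℝ} {a b : ℝ} (hab : a ≤ b)
    (hψ : ContinuousOn ψ (Icc a b))
    (hslope : ∀ x ∈ Ioo a b, ∀ r > 0, ∃ᶠ z in 𝓝[>] x, slope ψ x z < r) :
    ψ b ≤ ψ a := by
  rcases hab.eq_or_lt with rfl | hlt
  · exact le_rfl
  have hinterior : ∀ a' ∈ Ioo a b, ψ b ≤ ψ a' := fun a' ha' =>
    image_le_of_liminf_slope_right_le_deriv_boundary (B := fun _ => ψ a') (B' := fun _ => 0)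
      (hψ.mono (Icc_subset_Icc ha'.1.le le_rfl)) le_rfl continuousOn_const
      (fun x _ => hasDerivWithinAt_const x _ _)
      (fun x hx r hr => hslope x ⟨ha'.1.trans_le hx.1, hx.2⟩ r hr) (right_mem_Icc.2 ha'.2.le)
  have : (𝓝[Ioo a b] a).NeBot := by
    rw [nhdsWithin_Ioo_eq_nhdsGT hlt]
    infer_instance
  exact ge_of_tendsto ((hψ a (left_mem_Icc.2 hab)).mono_left (nhdsWithin_mono a Ioo_subset_Icc_self))
    (eventually_mem_nhdsWithin.mono hinterior)

theorem le_of_frequently_slope_right_lt_off_finite {ψ : ℝ → ℝ} {E : Set ℝ} (hE : E.Finite)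
    {a b : ℝ} (hab : a ≤ b) (hψ : ContinuousOn ψ (Icc a b))
    (hslope : ∀ x ∈ Ioo a b \ E, ∀ r > 0, ∃ᶠ z in 𝓝[>] x, slope ψ x z < r) :
    ψ b ≤ ψ a := by
  induction E, hE using Set.Finite.induction_on generalizing a b with
  | empty => exact le_of_frequently_slope_right_lt hab hψ fun x hx => hslope x ⟨hx, id⟩
  | @insert e E _ _ ih =>
    by_cases he : e ∈ Ioo a b
    · have hleft : ψ e ≤ ψ a := ih he.1.le (hψ.mono (Icc_subset_Icc le_rfl he.2.le))
        fun x hx => hslope x ⟨Ioo_subset_Ioo le_rfl he.2.le hx.1,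
          by simpa [not_or] using ⟨hx.1.2.ne, hx.2⟩⟩
      have hright : ψ b ≤ ψ e := ih he.2.le (hψ.mono (Icc_subset_Icc he.1.le le_rfl))
        fun x hx => hslope x ⟨Ioo_subset_Ioo he.1.le le_rfl hx.1,
          by simpa [not_or] using ⟨hx.1.1.ne', hx.2⟩⟩
      exact hright.trans hleft
    · exact ih hab hψ fun x hx => hslope x ⟨hx.1,
        by simpa [not_or] using ⟨fun h => he (h ▸ hx.1), hx.2⟩⟩

/-- Comparing `φ` with the linear function of slope `c` to the right of `x` reduces the estimate
to the derivative `(V' + c V x) e^{c x} ≤ 0` of `V t * exp (c * t)`. -/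
theorem eventually_slope_mul_exp_lt {V φ : ℝ → ℝ} {x V' c r : ℝ} (hV : HasDerivAt V V' x)
    (hV_nonneg : ∀ᶠ z in 𝓝[>] x, 0 ≤ V z) (hφ : ∀ᶠ z in 𝓝[>] x, φ z - φ x ≤ c * (z - x))
    (hV' : V' + c * V x ≤ 0) (hr : 0 < r) :
    ∀ᶠ z in 𝓝[>] x, slope (fun t => V t * Real.exp (φ t)) x z < r := by
  set g : ℝ → ℝ := fun t => V t * Real.exp (c * t)
  set e := Real.exp (φ x - c * x)
  have he : 0 < e := Real.exp_pos _
  have hg : HasDerivAt g (V' * Real.exp (c * x) + V x * (Real.exp (c * x) * (c * 1))) x :=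
    hV.mul ((hasDerivAt_id x).const_mul c).exp
  have hg' : V' * Real.exp (c * x) + V x * (Real.exp (c * x) * (c * 1)) < r / e := by
    have : (V' + c * V x) * Real.exp (c * x) ≤ 0 :=
      mul_nonpos_of_nonpos_of_nonneg hV' (Real.exp_pos _).le
    linarith [div_pos hr he]
  have hslope_g : ∀ᶠ z in 𝓝[>] x, slope g x z < r / e :=
    (hasDerivAt_iff_tendsto_slope.1 hg).mono_left (nhdsWithin_mono x fun z hz => ne_of_gt hz)
      |>.eventually (eventually_lt_nhds hg')
  filter_upwards [hV_nonneg, hφ, hslope_g, self_mem_nhdsWithin] with z hVz hφz hgz hxz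
  have hψz : V z * Real.exp (φ z) ≤ e * g z := by
    rw [mul_left_comm, ← Real.exp_add]
    exact mul_le_mul_of_nonneg_left (Real.exp_le_exp.2 (by linarith)) hVz
  have hψx : V x * Real.exp (φ x) = e * g x := by
    rw [mul_left_comm, ← Real.exp_add, sub_add_cancel]
  calc slope (fun t => V t * Real.exp (φ t)) x z ≤ e * slope g x z := by
        rw [slope_def_field, slope_def_field, mul_div_assoc', mul_sub, ← hψx]
        exact div_le_div_of_nonneg_right (by linarith) (sub_pos.2 hxz).le
    _ < e * (r / e) := mul_lt_mul_of_pos_left hgz he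
    _ = r := mul_div_cancel₀ r he.ne'

theorem le_exp_mul_volume_inter_Ico {V V' : ℝ → ℝ} {U E : Set ℝ} {a b C D : ℝ} (hab : a ≤ b)
    (hCD : 0 ≤ C + D) (hUo : IsOpen U) (hU : volume U ≠ ⊤) (hE : E.Finite)
    (hV_nonneg : ∀ t ∈ Icc a b, 0 ≤ V t) (hVcont : ContinuousOn V (Icc a b))
    (hderiv : ∀ t ∈ Ioo a b \ E, HasDerivAt V (V' t) t)
    (hin : ∀ t ∈ (U ∩ Ioo a b) \ E, V' t ≤ D * V t)
    (hout : ∀ t ∈ (Ioo a b \ U) \ E, V' t ≤ -C * V t) :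
    V b ≤ Real.exp ((C + D) * volume.real (U ∩ Ico a b) - C * (b - a)) * V a := by
  set m := occupationTime U
  set φ : ℝ → ℝ := fun t => C * t - (C + D) * m t
  have hφ : Continuous φ := by
    have := (lipschitzWith_occupationTime hU).continuous
    fun_prop
  have hψ : V b * Real.exp (φ b) ≤ V a * Real.exp (φ a) := by
    refine le_of_frequently_slope_right_lt_off_finite hE hab
      (hVcont.mul (Real.continuous_exp.comp hφ).continuousOn)
      fun x ⟨hx, hxE⟩ r hr => Eventually.frequently ?_
    have hV_nonneg' : ∀ᶠ z in 𝓝[>] x, 0 ≤ V z := by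
      filter_upwards [Ioo_mem_nhdsGT hx.2] with z hz
      exact hV_nonneg z ⟨(hx.1.trans hz.1).le, hz.2.le⟩
    by_cases hxU : x ∈ U
    · obtain ⟨u, hxu, hu⟩ := mem_nhdsGE_iff_exists_Ico_subset.1
        (mem_nhdsWithin_of_mem_nhds (hUo.mem_nhds hxU))
      refine eventually_slope_mul_exp_lt (c := -D) (hderiv x ⟨hx, hxE⟩) hV_nonneg' ?_
        (by linarith [hin x ⟨⟨hxU, hx⟩, hxE⟩]) hr
      filter_upwards [Ioo_mem_nhdsGT hxu] with z hz
      have := occupationTime_sub_of_Ico_subset hU hz.1.le ((Ico_subset_Ico_right hz.2.le).trans hu)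
      simp only [φ]
      linear_combination (-(C + D)) * this
    · refine eventually_slope_mul_exp_lt (c := C) (hderiv x ⟨hx, hxE⟩) hV_nonneg' ?_
        (by linarith [hout x ⟨⟨hx, hxU⟩, hxE⟩]) hr
      filter_upwards [self_mem_nhdsWithin] with z hz
      have := mul_nonneg hCD (sub_nonneg.2 (monotone_occupationTime hU (le_of_lt hz)))
      simp only [φ]
      linarith
  have hm : m b - m a = volume.real (U ∩ Ico a b) := occupationTime_sub hU hab
  calc V b = V b * Real.exp (φ b) * Real.exp (-φ b) := by
        rw [mul_assoc, ← Real.exp_add, add_neg_cancel, Real.exp_zero, mul_one]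
    _ ≤ V a * Real.exp (φ a) * Real.exp (-φ b) :=
        mul_le_mul_of_nonneg_right hψ (Real.exp_pos _).le
    _ = Real.exp ((C + D) * volume.real (U ∩ Ico a b) - C * (b - a)) * V a := by
        rw [mul_assoc, ← Real.exp_add, mul_comm, ← hm]
        congr 2
        ring

theorem lyapunov_growth_decay_general (C D T μ : ℝ) (hC : 0 < C) (hD : 0 < D) (hT : 0 < T)
    (V V' : ℝ → ℝ) (S F : Set ℝ) (hF : F.Finite)
    (hSsub : S ⊆ Set.Icc 0 T)
    (hμ : (volume S).toReal = μ)
    (hVnonneg : ∀ t ∈ Set.Icc (0:ℝ) T, 0 ≤ V t)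
    (hVcont : ContinuousOn V (Set.Icc 0 T))
    (hderiv : ∀ t ∈ Set.Ioo (0:ℝ) T \ F, HasDerivAt V (V' t) t)
    (hmismatch : ∀ t ∈ (S ∩ Set.Ioo (0:ℝ) T) \ F, V' t ≤ D * V t)
    (hmatch : ∀ t ∈ (Set.Ioo (0:ℝ) T \ S) \ F, V' t ≤ -C * V t) :
    V T ≤ Real.exp (D * μ - C * (T - μ)) * V 0 := by
  have hCD : 0 ≤ C + D := by linarith
  have hS : volume S ≠ ⊤ := measure_ne_top_of_subset hSsub measure_Icc_lt_top.ne
  have hbound : ∀ y > μ, V T ≤ Real.exp ((C + D) * y - C * T) * V 0 := by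
    intro y hy
    obtain ⟨U, hSU, hUo, hUS⟩ := exists_isOpen_lt_add S hS (ε := ENNReal.ofReal (y - μ))
      (by simpa using hy)
    have hU : volume U ≠ ⊤ := (hUS.trans (by finiteness)).ne
    have hUy : volume.real (U ∩ Ico 0 T) ≤ y := by
      have := (ENNReal.toReal_lt_toReal hU (by finiteness)).2 hUS
      rw [ENNReal.toReal_add hS ENNReal.ofReal_ne_top, hμ, ENNReal.toReal_ofReal (by linarith),
        ← measureReal_def] at this
      linarith [measureReal_mono (μ := volume) (inter_subset_left (s := U) (t := Ico 0 T)) hU]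
    refine (le_exp_mul_volume_inter_Ico hT.le hCD hUo hU hF hVnonneg hVcont hderiv ?_ ?_).trans ?_
    · rintro t ⟨⟨-, ht⟩, htF⟩
      by_cases htS : t ∈ S
      · exact hmismatch t ⟨⟨htS, ht⟩, htF⟩
      · nlinarith [hmatch t ⟨⟨ht, htS⟩, htF⟩, hVnonneg t (Ioo_subset_Icc_self ht)]
    · exact fun t ⟨⟨ht, htU⟩, htF⟩ => hmatch t ⟨⟨ht, fun htS => htU (hSU htS)⟩, htF⟩
    · rw [sub_zero]
      gcongr
      exact hVnonneg 0 ⟨le_rfl, hT.le⟩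
  rw [show D * μ - C * (T - μ) = (C + D) * μ - C * T by ring]
  have hcont : Continuous fun y => Real.exp ((C + D) * y - C * T) * V 0 := by fun_prop
  exact ge_of_tendsto (hcont.continuousWithinAt (s := Ioi μ)) (eventually_nhdsWithin_of_forall hbound)

/-- Lyapunov growth/decay estimate: let `V : ℝ → ℝ` be nonnegative and continuous on `[0, T]`,
differentiable there except at finitely many points, with derivative `V'`. If `V' t ≤ D * V t`
on a measurable subset `S` of `[0, T]` of measure `μ` (the mismatch set) and
`V' t ≤ -C * V t` on the complement `[0, T] \ S`, then
`V T ≤ exp (D * μ - C * (T - μ)) * V 0`. -/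
theorem lyapunov_growth_decay (C D T μ : ℝ) (hC : 0 < C) (hD : 0 < D) (hT : 0 < T)
    (V V' : ℝ → ℝ) (S F : Set ℝ) (hF : F.Finite)
    (hS : MeasurableSet S) (hSsub : S ⊆ Set.Icc 0 T)
    (hμ : (volume S).toReal = μ)
    (hVnonneg : ∀ t ∈ Set.Icc (0:ℝ) T, 0 ≤ V t)
    (hVcont : ContinuousOn V (Set.Icc 0 T))
    (hderiv : ∀ t ∈ Set.Ioo (0:ℝ) T \ F, HasDerivAt V (V' t) t)
    (hmismatch : ∀ t ∈ (S ∩ Set.Ioo (0:ℝ) T) \ F, V' t ≤ D * V t)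
    (hmatch : ∀ t ∈ (Set.Ioo (0:ℝ) T \ S) \ F, V' t ≤ -C * V t) :
    V T ≤ Real.exp (D * μ - C * (T - μ)) * V 0 :=
  lyapunov_growth_decay_general C D T μ hC hD hT V V' S F hF hSsub hμ hVnonneg hVcont hderiv
    hmismatch hmatch
end

section
/- Fix a sampling period T_s > 0 and n ∈ ℕ with n ≥ 1. Let σ : [0,∞) → P be piecewise constant with dwell time n·T_s (consecutive switching times are at least n·T_s apart and there are no switches in [0, n·T_s)). Define the mismatch set M = {τ ≥ 0 : σ(τ) ≠ σ([τ]⁻)} where [τ]⁻ = k·T_s for k·T_s ≤ τ < (k+1)·T_s. Then for all t > 0, the total length μ(t,0) of M ∩ [0,t) satisfies μ(t,0) < t/n. -/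
open MeasureTheory

/-- The last sampling time `[τ]⁻ = k Tₛ` with `k Tₛ ≤ τ < (k+1) Tₛ`. -/
noncomputable def sampleTime (Ts τ : ℝ) : ℝ := ⌊τ / Ts⌋ * Ts

/-- `s` is a switching time of `σ`: `σ` is not constant on any neighborhood of `s`. -/
def IsSwitchTime (σ : ℝ → ℕ) (s : ℝ) : Prop :=
  ¬ ∃ ε > 0, ∀ u : ℝ, |u - s| < ε → σ u = σ s

/-- `σ` is right-continuous and piecewise constant. -/
def RightPiecewiseConstant (σ : ℝ → ℕ) : Prop :=
  ∀ s : ℝ, ∃ ε > 0, ∀ u ∈ Set.Ico s (s + ε), σ u = σ s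

/-- `σ` has dwell time `d`: consecutive switching times are at least `d` apart, and
there is no switch in `[0, d)`. -/
def HasDwellTime (σ : ℝ → ℕ) (d : ℝ) : Prop :=
  (∀ s t : ℝ, IsSwitchTime σ s → IsSwitchTime σ t → s < t → d ≤ t - s) ∧
  (∀ s ∈ Set.Ico (0 : ℝ) d, ¬ IsSwitchTime σ s)

/-- Total mismatch time `μ(t, t₀)`: the length of
`{τ ∈ [t₀, t) : σ τ ≠ σ [τ]⁻}`. -/
noncomputable def mismatchTime (Ts : ℝ) (σ : ℝ → ℕ) (t₀ t : ℝ) : ℝ :=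
  (volume {τ : ℝ | τ ∈ Set.Ico t₀ t ∧ σ τ ≠ σ (sampleTime Ts τ)}).toReal

/-!
A mismatch at `τ` means that `σ` changes value between `[τ]⁻` and `τ`; since `σ` is locally
constant away from its switching times and `[[τ]⁻, τ]` is connected, some switching time `s` lies
in `([τ]⁻, τ]`, so `τ ∈ [s, s + Tₛ)`. The mismatch set in `[0, t)` is therefore covered by the
intervals `[s, s + Tₛ)` over the switching times `s ∈ (0, t)`, and its length is at most `N Tₛ`,
`N` their number. These switching times lie in `[n Tₛ, t)` and are `n Tₛ` apart, so
`⌊s / (n Tₛ)⌋` takes distinct values in `{1, …, ⌈t / (n Tₛ)⌉ - 1}`, whence `N n Tₛ < t`.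
-/

open Set

section SwitchTimes

variable {σ : ℝ → ℕ}

lemma continuousAt_of_not_isSwitchTime {s : ℝ} (hs : ¬ IsSwitchTime σ s) :
    ContinuousAt σ s := by
  obtain ⟨ε, hε, hconst⟩ := not_not.mp hs
  exact tendsto_nhds_of_eventually_eq
    (Metric.eventually_nhds_iff.mpr ⟨ε, hε, fun u hu => hconst u hu⟩)

lemma RightPiecewiseConstant.continuousWithinAt_Ici (hσ : RightPiecewiseConstant σ) (s : ℝ) :
    ContinuousWithinAt σ (Ici s) s := by
  obtain ⟨ε, hε, hconst⟩ := hσ s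
  exact tendsto_nhds_of_eventually_eq
    (mem_nhdsGE_iff_exists_Ico_subset.mpr ⟨s + ε, lt_add_of_pos_right s hε, hconst⟩)

lemma RightPiecewiseConstant.exists_isSwitchTime_mem_Ioc (hσ : RightPiecewiseConstant σ)
    {a b : ℝ} (hab : a ≤ b) (hne : σ a ≠ σ b) : ∃ s ∈ Ioc a b, IsSwitchTime σ s := by
  by_contra! hnone
  have hcont : ContinuousOn σ (Icc a b) := by
    intro s hs
    rcases hs.1.eq_or_lt with has | has
    · exact has ▸ (hσ.continuousWithinAt_Ici s).mono Icc_subset_Ici_self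
    · exact (continuousAt_of_not_isSwitchTime (hnone s ⟨has, hs.2⟩)).continuousWithinAt
  exact hne (isPreconnected_Icc.constant hcont (left_mem_Icc.mpr hab) (right_mem_Icc.mpr hab))

end SwitchTimes

section Separated

variable {S : Set ℝ} {d t : ℝ}

lemma strictMonoOn_floor_div_of_separated (hd : 0 < d) (hS : S ⊆ Ici 0)
    (hsep : ∀ s ∈ S, ∀ s' ∈ S, s < s' → d ≤ s' - s) :
    StrictMonoOn (fun s => ⌊s / d⌋₊) S := by
  intro s hs s' hs' hss'
  have hstep : s / d + 1 ≤ s' / d := by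
    rw [div_add_one hd.ne', div_le_div_iff_of_pos_right hd]
    linarith [hsep s hs s' hs' hss']
  calc ⌊s / d⌋₊ < ⌊s / d⌋₊ + 1 := Nat.lt_succ_self _
    _ = ⌊s / d + 1⌋₊ := (Nat.floor_add_one (div_nonneg (hS hs) hd.le)).symm
    _ ≤ ⌊s' / d⌋₊ := Nat.floor_le_floor hstep

lemma mapsTo_floor_div_Ico (hd : 0 < d) :
    MapsTo (fun s => ⌊s / d⌋₊) (Ico d t) (Ico 1 ⌈t / d⌉₊) := by
  intro s ⟨hds, hst⟩
  refine ⟨Nat.le_floor ?_, Nat.floor_lt_ceil_of_lt_of_pos ?_ ?_⟩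
  · simpa using (one_le_div hd).mpr hds
  · exact div_lt_div_of_pos_right hst hd
  · exact div_pos (hd.trans (hds.trans_lt hst)) hd

lemma finite_and_ncard_mul_lt_of_separated (hd : 0 < d) (ht : 0 < t) (hS : S ⊆ Ico d t)
    (hsep : ∀ s ∈ S, ∀ s' ∈ S, s < s' → d ≤ s' - s) :
    S.Finite ∧ S.ncard * d < t := by
  have hinj :=
    (strictMonoOn_floor_div_of_separated hd (fun s hs => hd.le.trans (hS hs).1) hsep).injOn
  have hmaps := (mapsTo_floor_div_Ico hd).mono_left hS
  refine ⟨(finite_Ico _ _).of_injOn hmaps hinj, ?_⟩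
  have hcard : S.ncard ≤ ⌈t / d⌉₊ - 1 := by
    simpa using ncard_le_ncard_of_injOn _ hmaps hinj
  have hceil_pos : 1 ≤ ⌈t / d⌉₊ := Nat.ceil_pos.mpr (by positivity)
  have hceil : (⌈t / d⌉₊ : ℝ) < t / d + 1 := Nat.ceil_lt_add_one (by positivity)
  calc (S.ncard : ℝ) * d ≤ ((⌈t / d⌉₊ - 1 : ℕ) : ℝ) * d := by gcongr
    _ < t := by
      rw [Nat.cast_sub hceil_pos, ← lt_div_iff₀ hd]
      push_cast
      linarith

end Separated

lemma HasDwellTime.le_of_isSwitchTime {σ : ℝ → ℕ} {d s : ℝ} (hσ : HasDwellTime σ d)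
    (hs0 : 0 ≤ s) (hs : IsSwitchTime σ s) : d ≤ s :=
  not_lt.mp fun hsd => hσ.2 s ⟨hs0, hsd⟩ hs

section Sampling

variable {Ts : ℝ}

lemma sampleTime_le (τ : ℝ) (hTs : 0 < Ts) : sampleTime Ts τ ≤ τ :=
  (le_div_iff₀ hTs).1 (Int.floor_le _)

lemma lt_sampleTime_add (τ : ℝ) (hTs : 0 < Ts) : τ < sampleTime Ts τ + Ts := by
  have := (div_lt_iff₀ hTs).1 (Int.lt_floor_add_one (τ / Ts))
  rw [sampleTime]
  linarith

lemma sampleTime_nonneg (hTs : 0 < Ts) {τ : ℝ} (hτ : 0 ≤ τ) : 0 ≤ sampleTime Ts τ :=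
  mul_nonneg (mod_cast Int.floor_nonneg.mpr (div_nonneg hτ hTs.le)) hTs.le

end Sampling

lemma RightPiecewiseConstant.mismatch_subset_biUnion_Ico {σ : ℝ → ℕ} {Ts t : ℝ}
    (hσ : RightPiecewiseConstant σ) (hTs : 0 < Ts) :
    {τ : ℝ | τ ∈ Ico 0 t ∧ σ τ ≠ σ (sampleTime Ts τ)} ⊆
      ⋃ s ∈ {s | s ∈ Ioo 0 t ∧ IsSwitchTime σ s}, Ico s (s + Ts) := by
  rintro τ ⟨⟨hτ0, hτt⟩, hne⟩
  obtain ⟨s, ⟨hlt, hle⟩, hsw⟩ := hσ.exists_isSwitchTime_mem_Ioc (sampleTime_le τ hTs) hne.symm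
  refine mem_biUnion ⟨⟨(sampleTime_nonneg hTs hτ0).trans_lt hlt, hle.trans_lt hτt⟩, hsw⟩ ⟨hle, ?_⟩
  linarith [lt_sampleTime_add τ hTs]

lemma volume_biUnion_Ico_le {S : Set ℝ} (hS : S.Finite) (ℓ : ℝ) :
    volume (⋃ s ∈ S, Ico s (s + ℓ)) ≤ ENNReal.ofReal (S.ncard * ℓ) := by
  calc volume (⋃ s ∈ S, Ico s (s + ℓ)) ≤ ∑ s ∈ hS.toFinset, volume (Ico s (s + ℓ)) := by
        simpa using measure_biUnion_finset_le (μ := volume) hS.toFinset (fun s => Ico s (s + ℓ))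
    _ = ENNReal.ofReal (S.ncard * ℓ) := by
        simp [Real.volume_Ico, ENNReal.ofReal_mul, ncard_eq_toFinset_card S hS]

/-- If `σ` is a piecewise-constant switching signal with dwell time `n Tₛ` (`n ≥ 1`),
then the total mismatch time on `[0, t)` satisfies `μ(t, 0) < t / n` for all `t > 0`. -/
theorem mismatchTime_lt_of_dwellTime (Ts : ℝ) (hTs : 0 < Ts) (n : ℕ) (hn : 1 ≤ n)
    (σ : ℝ → ℕ) (hσ : RightPiecewiseConstant σ) (hdwell : HasDwellTime σ (n * Ts))
    (t : ℝ) (ht : 0 < t) :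
    mismatchTime Ts σ 0 t < t / n := by
  have hn' : (0 : ℝ) < n := by exact_mod_cast hn
  set S := {s : ℝ | s ∈ Ioo 0 t ∧ IsSwitchTime σ s}
  have hS : S ⊆ Ico (n * Ts) t := fun s hs =>
    ⟨hdwell.le_of_isSwitchTime hs.1.1.le hs.2, hs.1.2⟩
  obtain ⟨hfin, hcount⟩ := finite_and_ncard_mul_lt_of_separated (by positivity) ht hS
    fun s hs s' hs' hss' => hdwell.1 s s' hs.2 hs'.2 hss'
  calc mismatchTime Ts σ 0 t ≤ S.ncard * Ts :=
        ENNReal.toReal_le_of_le_ofReal (by positivity) <|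
          (measure_mono (hσ.mismatch_subset_biUnion_Ico hTs)).trans
            (volume_biUnion_Ico_le hfin Ts)
    _ < t / n := by
      rw [lt_div_iff₀ hn']
      linarith
end

section
/- Let m ∈ ℕ, n ∈ ℕ, T_s > 0, ε > 0. There exists a piecewise constant switching signal σ with dwell time n·T_s and a time t ≥ m·n·T_s such that the total mismatch time satisfies μ(t, 0) ≥ t/n − (T_s/n + ε). Concretely, with switches at k·n·T_s + ε/m for k = 1,…,m and t = m·n·T_s + T_s, one has μ(t,0) = m·T_s − ε = t/n − (T_s/n + ε). -/
open MeasureTheory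

/-!
The witness is a staircase signal stepping up by one at the times `e + k n Tₛ`, `k ≥ 1`,
a little after the sampling instants `k n Tₛ`. On `[k n Tₛ + e, k n Tₛ + Tₛ)` the last
sample still sees the previous mode, so each of the first `m` switches costs a mismatch of
length `Tₛ - e`. With `m e ≤ ε` and `t = m n Tₛ + Tₛ` this gives
`μ(t, 0) ≥ m Tₛ - ε = t / n - (Tₛ / n + ε)`.
-/

open Set Filter Topology Function

lemma Nat.eventually_floor_eq {x : ℝ} (hx : ∀ k : ℕ, 0 < k → x ≠ k) :
    ∀ᶠ y in 𝓝 x, ⌊y⌋₊ = ⌊x⌋₊ := by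
  rcases lt_or_ge x 1 with hx1 | hx1
  · filter_upwards [Iio_mem_nhds hx1] with y hy
    rw [Nat.floor_eq_zero.2 hy, Nat.floor_eq_zero.2 hx1]
  · have hlt : (⌊x⌋₊ : ℝ) < x :=
      (Nat.floor_le (by linarith)).lt_of_ne (hx _ (Nat.floor_pos.2 hx1)).symm
    filter_upwards [Ioo_mem_nhds hlt (Nat.lt_floor_add_one x)] with y hy
    exact Nat.floor_eq_on_Ico _ _ (Ioo_subset_Ico_self hy)

lemma Nat.eventually_nhdsGE_floor_eq (x : ℝ) : ∀ᶠ y in 𝓝[≥] x, ⌊y⌋₊ = ⌊x⌋₊ :=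
  (tendsto_pure.1 (tendsto_floor_right_pure_floor x)).mono fun y hy => by
    rw [← Int.floor_toNat, hy, Int.floor_toNat]

lemma not_isSwitchTime_iff {σ : ℝ → ℕ} {s : ℝ} :
    ¬ IsSwitchTime σ s ↔ ∀ᶠ u in 𝓝 s, σ u = σ s := by
  simp [IsSwitchTime, Metric.eventually_nhds_iff, Real.dist_eq]

lemma RightPiecewiseConstant.of_eventually {σ : ℝ → ℕ}
    (h : ∀ s, ∀ᶠ u in 𝓝[≥] s, σ u = σ s) : RightPiecewiseConstant σ := fun s => by
  obtain ⟨u, hsu, hu⟩ := (nhdsGE_basis_Ico s).eventually_iff.1 (h s)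
  exact ⟨u - s, sub_pos.2 hsu, fun y hy => hu (by rwa [add_sub_cancel] at hy)⟩

lemma hasDwellTime_zero (σ : ℝ → ℕ) : HasDwellTime σ 0 :=
  ⟨fun _ _ _ _ hst => (sub_pos.2 hst).le, fun _ hs => absurd hs.2 (not_lt.2 hs.1)⟩

lemma sampleTime_eq_of_mem_Ico {Ts τ : ℝ} (hTs : 0 < Ts) {j : ℤ}
    (hτ : τ ∈ Ico (j * Ts) ((j + 1) * Ts)) : sampleTime Ts τ = j * Ts := by
  rw [sampleTime, Int.floor_eq_iff.2 ⟨(le_div_iff₀ hTs).2 hτ.1, (div_lt_iff₀ hTs).2 hτ.2⟩]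

lemma toReal_volume_le_mismatchTime {Ts t₀ t : ℝ} {σ : ℝ → ℕ} {S : Set ℝ}
    (hS : ∀ τ ∈ S, τ ∈ Ico t₀ t ∧ σ τ ≠ σ (sampleTime Ts τ)) :
    (volume S).toReal ≤ mismatchTime Ts σ t₀ t :=
  ENNReal.toReal_mono
    (ne_top_of_le_ne_top (by simp [Real.volume_Ico]) (measure_mono fun _ hτ => hτ.1))
    (measure_mono hS)

lemma volume_biUnion_Ico_add_mul (s : Finset ℕ) (a : ℝ) {d w : ℝ} (hwd : w ≤ d) :
    volume (⋃ k ∈ s, Ico (a + k * d) (a + k * d + w)) = s.card * ENNReal.ofReal w := by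
  have hsub (k : ℕ) :
      Ico (a + k * d) (a + k * d + w) ⊆ Ico (a + (k : ℤ) • d) (a + ((k : ℤ) + 1) • d) :=
    Ico_subset_Ico (by simp) (by simp [add_mul]; linarith)
  have hdisj : Pairwise (Disjoint on fun k : ℕ => Ico (a + k * d) (a + k * d + w)) :=
    ((pairwise_disjoint_Ico_add_zsmul a d).comp_of_injective Nat.cast_injective).mono
      fun j k h => h.mono (hsub j) (hsub k)
  rw [measure_biUnion_finset (hdisj.set_pairwise _) fun _ _ => measurableSet_Ico]
  simp [Real.volume_Ico]

noncomputable def staircase (d e τ : ℝ) : ℕ := ⌊(τ - e) / d⌋₊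

section staircase

variable {d e : ℝ}

lemma staircase_eq (hd : 0 < d) {k : ℕ} {τ : ℝ}
    (hτ : τ ∈ Ico (e + k * d) (e + (k + 1) * d)) : staircase d e τ = k :=
  Nat.floor_eq_on_Ico k _
    ⟨(le_div_iff₀ hd).2 (by linarith [hτ.1]), (div_lt_iff₀ hd).2 (by linarith [hτ.2])⟩

lemma staircase_lt (hd : 0 < d) {k : ℕ} (hk : k ≠ 0) {τ : ℝ} (hτ : τ < e + k * d) :
    staircase d e τ < k :=
  (Nat.floor_lt' hk).2 ((div_lt_iff₀ hd).2 (by linarith))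

lemma rightPiecewiseConstant_staircase (hd : 0 ≤ d) : RightPiecewiseConstant (staircase d e) := by
  refine RightPiecewiseConstant.of_eventually fun s => ?_
  have hmaps : Tendsto (fun τ => (τ - e) / d) (𝓝[≥] s) (𝓝[≥] ((s - e) / d)) :=
    ((continuous_id.sub continuous_const).div_const d).continuousWithinAt.tendsto_nhdsWithin
      fun τ hτ => div_le_div_of_nonneg_right (sub_le_sub_right hτ e) hd
  exact hmaps.eventually (Nat.eventually_nhdsGE_floor_eq _)

lemma exists_eq_of_isSwitchTime_staircase (hd : 0 < d) {s : ℝ}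
    (hs : IsSwitchTime (staircase d e) s) : ∃ k : ℕ, 0 < k ∧ s = e + k * d := by
  by_contra! h
  refine not_isSwitchTime_iff.2 ?_ hs
  have hx : ∀ k : ℕ, 0 < k → (s - e) / d ≠ k := fun k hk hsk =>
    h k hk (by rw [div_eq_iff hd.ne'] at hsk; linarith)
  have hcont : Tendsto (fun τ => (τ - e) / d) (𝓝 s) (𝓝 ((s - e) / d)) :=
    ((continuous_id.sub continuous_const).div_const d).tendsto s
  exact hcont.eventually (Nat.eventually_floor_eq hx)

lemma hasDwellTime_staircase (hd : 0 < d) (he : 0 ≤ e) : HasDwellTime (staircase d e) d := by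
  refine ⟨fun s t hs ht hst => ?_, fun s hs hsw => ?_⟩
  · obtain ⟨j, -, rfl⟩ := exists_eq_of_isSwitchTime_staircase hd hs
    obtain ⟨k, -, rfl⟩ := exists_eq_of_isSwitchTime_staircase hd ht
    have hjk : (j : ℝ) < k := lt_of_mul_lt_mul_right (by linarith) hd.le
    have : (j : ℝ) + 1 ≤ k := by exact_mod_cast Nat.cast_lt.1 hjk
    nlinarith
  · obtain ⟨k, hk, rfl⟩ := exists_eq_of_isSwitchTime_staircase hd hsw
    have : (1 : ℝ) ≤ k := by exact_mod_cast hk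
    nlinarith [hs.2]

end staircase

section mismatch

variable {Ts e : ℝ} {n : ℕ}

lemma staircase_ne_staircase_sampleTime (hTs : 0 < Ts) (hn : 0 < n) (he : 0 < e)
    {k : ℕ} (hk : k ≠ 0) {τ : ℝ}
    (hτ : τ ∈ Ico (e + k * (n * Ts)) (e + k * (n * Ts) + (Ts - e))) :
    staircase (n * Ts) e τ ≠ staircase (n * Ts) e (sampleTime Ts τ) := by
  have hnTs : Ts ≤ n * Ts := le_mul_of_one_le_left hTs.le (by exact_mod_cast hn)
  have hsample : sampleTime Ts τ = k * (n * Ts) := by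
    have := sampleTime_eq_of_mem_Ico hTs (τ := τ) (j := (k * n : ℕ))
      ⟨by push_cast; linarith [hτ.1], by push_cast; linarith [hτ.2]⟩
    rw [this]; push_cast; ring
  rw [hsample, staircase_eq (by positivity) ⟨hτ.1, by linarith [hτ.2]⟩]
  exact (staircase_lt (by positivity) hk (by linarith)).ne'

lemma mul_sub_le_mismatchTime_staircase (hTs : 0 < Ts) (hn : 0 < n) (he : 0 < e) (heTs : e ≤ Ts)
    (m : ℕ) : m * (Ts - e) ≤ mismatchTime Ts (staircase (n * Ts) e) 0 (m * (n * Ts) + Ts) := by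
  have hnTs : Ts ≤ n * Ts := le_mul_of_one_le_left hTs.le (by exact_mod_cast hn)
  set S := ⋃ k ∈ Finset.Icc 1 m, Ico (e + k * (n * Ts)) (e + k * (n * Ts) + (Ts - e))
  have hvol : volume S = m * ENNReal.ofReal (Ts - e) := by
    rw [volume_biUnion_Ico_add_mul _ _ (by linarith), Nat.card_Icc, add_tsub_cancel_right]
  calc (m : ℝ) * (Ts - e) = (volume S).toReal := by
        rw [hvol, ENNReal.toReal_mul, ENNReal.toReal_natCast, ENNReal.toReal_ofReal (by linarith)]
    _ ≤ _ := toReal_volume_le_mismatchTime fun τ hτ => by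
        obtain ⟨k, hk, hτ⟩ := mem_iUnion₂.1 hτ
        obtain ⟨hk1, hkm⟩ := Finset.mem_Icc.1 hk
        have : (k : ℝ) ≤ m := by exact_mod_cast hkm
        refine ⟨⟨by nlinarith [hτ.1], by nlinarith [hτ.2]⟩, ?_⟩
        exact staircase_ne_staircase_sampleTime hTs hn he (by omega) hτ

end mismatch

/-- Near-tightness of the mismatch bound: for any `m, n` and `ε > 0` there is a switching
signal `σ` with dwell time `n Tₛ` and a time `t ≥ m n Tₛ` such that
`μ(t, 0) ≥ t / n - (Tₛ / n + ε)`. -/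
theorem exists_mismatchTime_ge (Ts ε : ℝ) (hTs : 0 < Ts) (hε : 0 < ε) (m n : ℕ) :
    ∃ σ : ℝ → ℕ, RightPiecewiseConstant σ ∧ HasDwellTime σ (n * Ts) ∧
      ∃ t : ℝ, (m : ℝ) * n * Ts ≤ t ∧
        t / n - (Ts / n + ε) ≤ mismatchTime Ts σ 0 t := by
  obtain rfl | hn := Nat.eq_zero_or_pos n
  -- for `n = 0` the divisions by `n` are junk and the bound reads `-ε ≤ μ(0, 0)`
  · exact ⟨fun _ => 0, fun _ => ⟨1, one_pos, fun _ _ => rfl⟩,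
      by simpa using hasDwellTime_zero _, 0, by simp, by simpa [mismatchTime] using hε.le⟩
  set e := min Ts ε / (m + 1) with he_def
  have he : 0 < e := by positivity
  have hme : (m + 1) * e = min Ts ε := by rw [he_def]; field_simp
  have hmin := min_le_left Ts ε
  have hmin' := min_le_right Ts ε
  refine ⟨staircase (n * Ts) e, rightPiecewiseConstant_staircase (by positivity),
    hasDwellTime_staircase (by positivity) he.le, m * (n * Ts) + Ts, by nlinarith, ?_⟩
  calc (m * (n * Ts) + Ts) / n - (Ts / n + ε) = m * Ts - ε := by field_simp; ring
    _ ≤ m * (Ts - e) := by nlinarith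
    _ ≤ _ := mul_sub_le_mismatchTime_staircase hTs hn he (by nlinarith) m
end
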